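/- Let F be a field with more than d elements and n, d ≥ 1. Let f be a nonzero element of the unitization of F_{Ā,C̄}[X] whose F_{Ā,C̄}[X]-component has degree ≤ d. Then f is not a polynomial identity for the algebra A_d: there exist b_1, …, b_n ∈ A_d such that the evaluation of f at (b_1,…,b_n) — via the unique unital F-algebra homomorphism from the unitization of F_{Ā,C̄}[X] to A_d sending x_i ↦ b_i — is nonzero. -/

import Mathlib

noncomputable section

open scoped BigOperators

namespace NAPIT

/-- The list of (leaf label, leaf level) pairs of a nonassociative monomial (element of the
free magma), in left-to-right order, where the root of the monomial is at level `s`. -/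
def leafData {n : ℕ} : FreeMagma (Fin n) → ℕ → List (Fin n × ℕ)
  | FreeMagma.of i, s => [(i, s)]
  | FreeMagma.mul x y, s => leafData x (s + 1) ++ leafData y (s + 1)

/-- The degree (number of leaves) of a nonassociative monomial. -/
def degM {n : ℕ} : FreeMagma (Fin n) → ℕ
  | FreeMagma.of _ => 1
  | FreeMagma.mul x y => degM x + degM y

/-- The depth of a nonassociative monomial (root at level 1; the depth is the maximal level
of a leaf). -/
def depthM {n : ℕ} : FreeMagma (Fin n) → ℕ
  | FreeMagma.of _ => 1
  | FreeMagma.mul x y => max (depthM x) (depthM y) + 1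

/-- Evaluation of a nonassociative monomial at `b : Fin n → A`, using `mul` as the product on
`A`; this is the unique magma homomorphism `FreeMagma (Fin n) → (A, mul)` with `x_i ↦ b i`. -/
def evalWith {n : ℕ} {A : Type*} (mul : A → A → A) (b : Fin n → A) : FreeMagma (Fin n) → A
  | FreeMagma.of i => b i
  | FreeMagma.mul x y => mul (evalWith mul b x) (evalWith mul b y)

/-- The multiset of all variants `m_ε` of a monomial `m`, where `ε` ranges over all choices of
a Boolean for each internal node of `m`, and `m_ε` is obtained from `m` by swapping the two
children at exactly those internal nodes where `ε` is true (counted with multiplicity). -/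
def variants {n : ℕ} : FreeMagma (Fin n) → Multiset (FreeMagma (Fin n))
  | FreeMagma.of i => {FreeMagma.of i}
  | FreeMagma.mul x y =>
      (variants x).bind fun x' => (variants y).bind fun y' =>
        {FreeMagma.mul x' y', FreeMagma.mul y' x'}

/-- The underlying module of the algebra `A'_d(R)`: arrays `x[i,j,k]` with
`i, j ∈ Fin (d+1)`, `k ∈ Fin d` (zero-based; the paper's indices are shifted by one). -/
def Arr (d : ℕ) (R : Type*) : Type _ := Fin (d + 1) → Fin (d + 1) → Fin d → R

namespace Arr

variable {d : ℕ} {R : Type*}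

instance instAddCommGroup [AddCommGroup R] : AddCommGroup (Arr d R) :=
  inferInstanceAs (AddCommGroup (Fin (d + 1) → Fin (d + 1) → Fin d → R))

instance instModule {S : Type*} [Semiring S] [AddCommGroup R] [Module S R] :
    Module S (Arr d R) :=
  inferInstanceAs (Module S (Fin (d + 1) → Fin (d + 1) → Fin d → R))

/-- The bilinear product `∘` of `A'_d(R)`:
`(x ∘ y)[i,j,k] = ∑_{l} x[i,l,k+1] * y[l,j,k+1]` if `k+1` is a legal third index, else `0`. -/
def aprod [CommRing R] (x y : Arr d R) : Arr d R := fun i j k =>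
  if h : (k : ℕ) + 1 < d then
    ∑ l : Fin (d + 1), x i l ⟨(k : ℕ) + 1, h⟩ * y l j ⟨(k : ℕ) + 1, h⟩
  else 0

instance instMul [CommRing R] : Mul (Arr d R) := ⟨aprod⟩

end Arr

/-- The algebra `C'_d(R)`: same underlying module as `A'_d(R)`, with the anticommutator
product `a ⊙ b = a ∘ b + b ∘ a`. -/
def CArr (d : ℕ) (R : Type*) : Type _ := Arr d R

namespace CArr

variable {d : ℕ} {R : Type*}

/-- The identity map `A'_d(R) → C'_d(R)` of underlying modules. -/
def ofArr (x : Arr d R) : CArr d R := x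

/-- The identity map `C'_d(R) → A'_d(R)` of underlying modules. -/
def toArr (x : CArr d R) : Arr d R := x

instance instAddCommGroup [AddCommGroup R] : AddCommGroup (CArr d R) :=
  inferInstanceAs (AddCommGroup (Arr d R))

instance instModule {S : Type*} [Semiring S] [AddCommGroup R] [Module S R] :
    Module S (CArr d R) :=
  inferInstanceAs (Module S (Arr d R))

instance instMul [CommRing R] : Mul (CArr d R) :=
  ⟨fun a b => ofArr (toArr a * toArr b + toArr b * toArr a)⟩

end CArr

/-- The element `Z_i ∈ A'_d(R)`, `R = MvPolynomial (Fin n × Fin d × Fin d) F`, whose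
`(j, j+1, k)` entry is the indeterminate `z_{i,j,k}` and whose other entries vanish. -/
def Z (F : Type*) [CommRing F] (n d : ℕ) (i : Fin n) :
    Arr d (MvPolynomial (Fin n × Fin d × Fin d) F) := fun j j' k =>
  if h : (j : ℕ) < d ∧ (j' : ℕ) = (j : ℕ) + 1 then
    MvPolynomial.X (i, ⟨(j : ℕ), h.1⟩, k)
  else 0

/-- The element `Z_i` regarded as an element of `C'_d(R)`. -/
def ZC (F : Type*) [CommRing F] (n d : ℕ) (i : Fin n) :
    CArr d (MvPolynomial (Fin n × Fin d × Fin d) F) := CArr.ofArr (Z F n d i)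

/-- The monomial `∏_{t=1}^{d'} z_{σ_m(t), (t-1) + k1, (l^m_t - 1) + k2}` associated to a
nonassociative monomial `m` of degree `d'` and offsets `k1, k2` (all indices zero-based; the
paper's 1-based offsets are `k1 + 1`, `k2 + 1`).  Indices which would fall out of range are
discarded (this never happens in the intended range of parameters). -/
def monProd (F : Type*) [CommRing F] {n : ℕ} (d : ℕ) (k1 k2 : ℕ) (m : FreeMagma (Fin n)) :
    MvPolynomial (Fin n × Fin d × Fin d) F :=
  (((leafData m 1).zipIdx.map Prod.swap).map fun p =>
    if h : p.1 + k1 < d ∧ p.2.2 - 1 + k2 < d then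
      MvPolynomial.X (p.2.1, ⟨p.1 + k1, h.1⟩, ⟨p.2.2 - 1 + k2, h.2⟩)
    else 0).prod

/-- `ψ(m) = ∑_ε ∏_{t=1}^{d'} z_{σ_{m_ε}(t), t, l^{m_ε}_t}` (1-based), the sum running over all
choices `ε` of a Boolean for each internal node of `m`. -/
def psi (F : Type*) [CommRing F] {n : ℕ} (d : ℕ) (m : FreeMagma (Fin n)) :
    MvPolynomial (Fin n × Fin d × Fin d) F :=
  ((variants m).map fun m' => monProd F d 0 0 m').sum

/-- The coefficient function of an element of the free nonunital nonassociative algebra. -/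
def coeffOf {F : Type*} [Semiring F] {n : ℕ}
    (f : FreeNonUnitalNonAssocAlgebra F (Fin n)) : FreeMagma (Fin n) →₀ F := f.coeff

/-- Evaluation of an element of the free nonunital nonassociative algebra on `x_1, …, x_n` at
the tuple `b`, with `mul` as the product of the target: the linear extension of
`m ↦ evalWith mul b m`, i.e. the unique nonunital `F`-algebra homomorphism sending
`x_i ↦ b i` into `(A, mul)`. -/
def evalNAWith {F : Type*} [Semiring F] {n : ℕ} {A : Type*}
    [AddCommMonoid A] [Module F A] (mul : A → A → A) (b : Fin n → A)
    (f : FreeNonUnitalNonAssocAlgebra F (Fin n)) : A :=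
  Finsupp.sum (coeffOf f) fun m c => c • evalWith mul b m

/-- Evaluation of an element of the free nonunital nonassociative algebra at a tuple `b` of
elements of a (not necessarily unital/associative) algebra `A`: the unique nonunital
`F`-algebra homomorphism sending `x_i ↦ b i`. -/
def evalNA {F : Type*} [Semiring F] {n : ℕ} {A : Type*}
    [AddCommMonoid A] [Mul A] [Module F A] (b : Fin n → A)
    (f : FreeNonUnitalNonAssocAlgebra F (Fin n)) : A :=
  evalNAWith (· * ·) b f

/-- Evaluation of an element of the unitization of the free nonunital nonassociative algebra
at a tuple `b` of elements of the unitization of `A`: the unique unital `F`-algebra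
homomorphism sending `x_i ↦ b i` (and the adjoined unit to the unit). -/
def evalUnit {F : Type*} [CommSemiring F] {n : ℕ} {A : Type*}
    [AddCommMonoid A] [Mul A] [Module F A] (b : Fin n → Unitization F A)
    (f : Unitization F (FreeNonUnitalNonAssocAlgebra F (Fin n))) : Unitization F A :=
  Unitization.inl f.fst + evalNA b f.snd

/-- The commutativity congruence on the free magma: the smallest equivalence relation with
`m₁ * m₂ ≈ m₂ * m₁` and compatible with the product. -/
inductive CommEq {n : ℕ} : FreeMagma (Fin n) → FreeMagma (Fin n) → Prop
  | refl (m : FreeMagma (Fin n)) : CommEq m m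
  | symm {a b : FreeMagma (Fin n)} : CommEq a b → CommEq b a
  | trans {a b c : FreeMagma (Fin n)} : CommEq a b → CommEq b c → CommEq a c
  | comm (a b : FreeMagma (Fin n)) : CommEq (a * b) (b * a)
  | mul_congr {a a' b b' : FreeMagma (Fin n)} :
      CommEq a a' → CommEq b b' → CommEq (a * b) (a' * b')

/-- The basis monomial `m` of the free nonunital nonassociative algebra. -/
def single1 (F : Type*) [Semiring F] {n : ℕ} (m : FreeMagma (Fin n)) :
    FreeNonUnitalNonAssocAlgebra F (Fin n) :=
  MonoidAlgebra.ofCoeff (Finsupp.single m 1 : FreeMagma (Fin n) →₀ F)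

/-- `I_comm`: the `F`-linear span of `{m − m' : m ≈ m'}` inside the free nonunital
nonassociative algebra. -/
def Icomm (F : Type*) [Field F] (n : ℕ) :
    Submodule F (FreeNonUnitalNonAssocAlgebra F (Fin n)) :=
  Submodule.span F
    {x | ∃ m m' : FreeMagma (Fin n), CommEq m m' ∧ x = single1 F m - single1 F m'}

/-!
Evaluate at the generic elements `Zₐ` of `A'_d`, whose only nonzero entries are indeterminates
`z_{a,j,k}` at the positions `(j, j + 1, k)`. A monomial `m` of degree `D ≤ d` then has, as entry
`(0, D, 0)` of its value, the commutative monomial `∏ₜ z_{aₜ, t, lₜ}`, where `aₜ` is the label and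
`lₜ` the depth of the `t`-th leaf of `m`. A full binary tree is recovered from the word of its leaf
labels and depths, so distinct `m` give distinct monomials, and entry `(0, D, 0)` of `f(Z)` is a
nonzero homogeneous polynomial of degree `D ≤ d < |F|`. It therefore does not vanish at some point
of `F`, and specialising the `Zₐ` there gives the required `bₐ`, taken inside `A'_d` so that the
unit component of `f` survives untouched.
-/

section LeafData

variable {n : ℕ}

lemma degM_mul (x y : FreeMagma (Fin n)) : degM (x * y) = degM x + degM y := rfl

lemma leafData_mul (x y : FreeMagma (Fin n)) (s : ℕ) :
    leafData (x * y) s = leafData x (s + 1) ++ leafData y (s + 1) := rfl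

lemma one_le_degM (m : FreeMagma (Fin n)) : 1 ≤ degM m := by
  induction m with
  | ih1 => exact le_rfl
  | ih2 x y hx _ => exact hx.trans (Nat.le_add_right _ _)

lemma leafData_length (m : FreeMagma (Fin n)) (s : ℕ) : (leafData m s).length = degM m := by
  induction m generalizing s with
  | ih1 => rfl
  | ih2 x y hx hy => simp only [leafData, List.length_append, hx, hy, degM]

lemma le_of_mem_leafData {m : FreeMagma (Fin n)} {s : ℕ} {p : Fin n × ℕ}
    (hp : p ∈ leafData m s) : s ≤ p.2 := by
  induction m generalizing s with
  | ih1 => simp_all [leafData]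
  | ih2 x y hx hy =>
    rcases List.mem_append.mp hp with hp | hp
    · exact (hx hp).trans' (Nat.le_succ s)
    · exact (hy hp).trans' (Nat.le_succ s)

lemma not_singleton_prefix_and_leafData_mul_prefix {a : Fin n} {x y : FreeMagma (Fin n)}
    {s : ℕ} {T : List (Fin n × ℕ)} (ha : [(a, s)] <+: T) (hxy : leafData (x * y) s <+: T) :
    False := by
  have hlevel : ∀ q ∈ leafData (x * y) s, s + 1 ≤ q.2 := fun q hq => by
    rw [leafData_mul, List.mem_append] at hq
    rcases hq with hq | hq <;> exact le_of_mem_leafData hq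
  obtain ⟨q, L, hqL⟩ := List.exists_cons_of_ne_nil
    (List.ne_nil_of_length_pos ((one_le_degM (x * y)).trans_eq (leafData_length _ s).symm))
  obtain ⟨r, rfl⟩ := ha
  obtain ⟨r', hr'⟩ := hqL ▸ hxy
  have hq := hlevel q (hqL ▸ List.mem_cons_self)
  rw [(List.cons.inj hr').1] at hq
  omega

/-- Leaf words form a prefix code; this form, rather than injectivity, is what survives the
induction, where only the words of the left subtrees are known to be comparable. -/
lemma eq_of_leafData_prefix {m m' : FreeMagma (Fin n)} {s : ℕ} {T : List (Fin n × ℕ)}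
    (hm : leafData m s <+: T) (hm' : leafData m' s <+: T) : m = m' := by
  induction m generalizing m' s T with
  | ih1 a =>
    cases m' with
    | of a' =>
      obtain ⟨r, rfl⟩ := hm
      obtain ⟨r', hr'⟩ := hm'
      simp_all [leafData]
    | mul x' y' => exact (not_singleton_prefix_and_leafData_mul_prefix hm hm').elim
  | ih2 x y hx hy =>
    cases m' with
    | of a' => exact (not_singleton_prefix_and_leafData_mul_prefix hm' hm).elim
    | mul x' y' =>
      have hxy : leafData x (s + 1) ++ leafData y (s + 1) <+: T := hm
      have hxy' : leafData x' (s + 1) ++ leafData y' (s + 1) <+: T := hm'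
      obtain rfl : x = x' :=
        hx ((List.prefix_append _ _).trans hxy) ((List.prefix_append _ _).trans hxy')
      obtain ⟨r, rfl⟩ := hxy
      rw [List.append_assoc, List.prefix_append_right_inj] at hxy'
      rw [hy (List.prefix_append _ r) hxy']
      rfl

lemma leafData_injective (s : ℕ) : Function.Injective fun m : FreeMagma (Fin n) => leafData m s :=
  fun m m' (h : leafData m s = leafData m' s) =>
    eq_of_leafData_prefix (T := leafData m s) List.prefix_rfl (h ▸ List.prefix_rfl)

end LeafData

section LeafExp

variable {n : ℕ}

/-- The exponent of the monomial `∏ₜ z_{aₜ, i + t, lₜ}` attached to a word `[(a₀, l₀), (a₁, l₁), …]`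
of leaf labels and depths, the `t`-th letter sitting in position `i + t`. -/
def leafExp : List (Fin n × ℕ) → ℕ → (Fin n × ℕ × ℕ →₀ ℕ)
  | [], _ => 0
  | p :: L, i => Finsupp.single (p.1, i, p.2) 1 + leafExp L (i + 1)

lemma leafExp_append (A B : List (Fin n × ℕ)) (i : ℕ) :
    leafExp (A ++ B) i = leafExp A i + leafExp B (i + A.length) := by
  induction A generalizing i with
  | nil => simp [leafExp]
  | cons p A ih =>
    simp only [List.cons_append, leafExp, ih, add_assoc, List.length_cons, Nat.add_comm 1]

lemma leafExp_apply_of_lt (L : List (Fin n × ℕ)) (a : Fin n) {i j : ℕ} (l : ℕ) (hj : j < i) :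
    leafExp L i (a, j, l) = 0 := by
  induction L generalizing i with
  | nil => rfl
  | cons p L ih =>
    rw [leafExp, Finsupp.add_apply, ih (by omega), Finsupp.single_apply, if_neg]
    simp only [Prod.mk.injEq]
    omega

lemma degree_leafExp (L : List (Fin n × ℕ)) (i : ℕ) : (leafExp L i).degree = L.length := by
  induction L generalizing i with
  | nil => simp [leafExp]
  | cons p L ih => rw [leafExp, map_add, ih, Finsupp.degree_single, List.length_cons, add_comm]

lemma leafExp_injective (i : ℕ) : Function.Injective fun L : List (Fin n × ℕ) => leafExp L i := by
  intro L L' h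
  have hlen : L.length = L'.length := by
    simpa only [degree_leafExp] using congrArg Finsupp.degree h
  induction L generalizing L' i with
  | nil => exact (List.length_eq_zero_iff.mp hlen.symm).symm
  | cons p L ih =>
    obtain _ | ⟨p', L'⟩ := L'
    · simp at hlen
    simp only [leafExp] at h
    have hp := congrArg (· (p.1, i, p.2)) h
    simp only [Finsupp.add_apply, Finsupp.single_eq_same,
      leafExp_apply_of_lt _ _ _ (Nat.lt_succ_self i), Finsupp.single_apply] at hp
    obtain rfl : p' = p := by
      by_contra hne
      rw [if_neg (by simpa [Prod.ext_iff] using hne)] at hp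
      exact one_ne_zero hp
    rw [ih (i + 1) (add_left_cancel h) (Nat.succ.inj hlen)]

end LeafExp

section Eval

variable {F : Type*} {n : ℕ}

lemma evalWith_mul {A : Type*} (mul : A → A → A) (b : Fin n → A) (x y : FreeMagma (Fin n)) :
    evalWith mul b (x * y) = mul (evalWith mul b x) (evalWith mul b y) := rfl

lemma evalWith_comp {A B : Type*} {mulA : A → A → A} {mulB : B → B → B} (φ : A → B)
    (hφ : ∀ a a', φ (mulA a a') = mulB (φ a) (φ a')) (b : Fin n → A) (m : FreeMagma (Fin n)) :
    evalWith mulB (φ ∘ b) m = φ (evalWith mulA b m) := by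
  induction m with
  | ih1 => rfl
  | ih2 x y hx hy => rw [evalWith_mul, evalWith_mul, hx, hy, hφ]

lemma evalNAWith_comp [Semiring F] {A B : Type*} [AddCommMonoid A] [Module F A]
    [AddCommMonoid B] [Module F B] {mulA : A → A → A} {mulB : B → B → B} (φ : A →ₗ[F] B)
    (hφ : ∀ a a', φ (mulA a a') = mulB (φ a) (φ a')) (b : Fin n → A)
    (g : FreeNonUnitalNonAssocAlgebra F (Fin n)) :
    evalNAWith mulB (φ ∘ b) g = φ (evalNAWith mulA b g) := by
  simp only [evalNAWith, map_finsuppSum, map_smul, evalWith_comp φ hφ]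

lemma evalUnit_comp_inr [CommSemiring F] {A : Type*} [AddCommMonoid A] [Mul A] [Module F A]
    (a : Fin n → A) (f : Unitization F (FreeNonUnitalNonAssocAlgebra F (Fin n))) :
    evalUnit (fun i => (a i : Unitization F A)) f =
      Unitization.inl f.fst + Unitization.inr (evalNA a f.snd) := by
  rw [evalUnit, evalNA, evalNA]
  congr 1
  exact evalNAWith_comp (Unitization.inrHom F F A) (Unitization.inr_mul F) a _

end Eval

namespace Arr

variable {F : Type*} [CommRing F] {d : ℕ}

lemma mul_apply {R : Type*} [CommRing R] (x y : Arr d R) (i j : Fin (d + 1)) (k : Fin d) :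
    (x * y) i j k = if h : (k : ℕ) + 1 < d then
      ∑ l : Fin (d + 1), x i l ⟨k + 1, h⟩ * y l j ⟨k + 1, h⟩ else 0 := rfl

def map {R S : Type*} [CommRing R] [CommRing S] [Algebra F R] [Algebra F S] (φ : R →ₐ[F] S) :
    Arr d R →ₗ[F] Arr d S where
  toFun x i j k := φ (x i j k)
  map_add' _ _ := funext fun _ => funext fun _ => funext fun _ => map_add φ _ _
  map_smul' _ _ := funext fun _ => funext fun _ => funext fun _ => map_smul φ _ _

lemma map_mul {R S : Type*} [CommRing R] [CommRing S] [Algebra F R] [Algebra F S]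
    (φ : R →ₐ[F] S) (x y : Arr d R) : map φ (x * y) = map φ x * map φ y := by
  funext i j k
  change φ ((x * y) i j k) = (map φ x * map φ y) i j k
  rw [mul_apply, mul_apply]
  split_ifs
  · simp only [map_sum, _root_.map_mul]
    rfl
  · exact map_zero φ

lemma evalNA_apply {R : Type*} [CommRing R] [Algebra F R] {n : ℕ} (b : Fin n → Arr d R)
    (g : FreeNonUnitalNonAssocAlgebra F (Fin n)) (i j : Fin (d + 1)) (k : Fin d) :
    evalNA b g i j k = (coeffOf g).sum fun m c => c • evalWith (· * ·) b m i j k := by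
  simp only [evalNA, evalNAWith, Finsupp.sum]
  exact map_sum (AddMonoidHom.mk' (fun x : Arr d R => x i j k) fun _ _ => rfl) _ _

end Arr

section Generic

variable (F : Type*) [CommRing F] (n d : ℕ)

def genericArr (a : Fin n) : Arr d (MvPolynomial (Fin n × ℕ × ℕ) F) := fun j j' k =>
  if (j' : ℕ) = j + 1 then MvPolynomial.X (a, j, k) else 0

variable {F n d}

lemma evalWith_genericArr_apply (m : FreeMagma (Fin n)) (i j : Fin (d + 1)) (k : Fin d)
    (hk : (k : ℕ) + degM m ≤ d) :
    evalWith (· * ·) (genericArr F n d) m i j k =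
      if (j : ℕ) = i + degM m then MvPolynomial.monomial (leafExp (leafData m k) i) 1 else 0 := by
  induction m generalizing i j k with
  | ih1 a => simp [evalWith, genericArr, degM, leafData, leafExp, MvPolynomial.X]
  | ih2 x y hx hy =>
    have hx1 := one_le_degM x
    have hy1 := one_le_degM y
    rw [degM_mul] at hk ⊢
    have hk' : (k : ℕ) + 1 < d := by omega
    rw [evalWith_mul, Arr.mul_apply, dif_pos hk']
    simp only [hx _ _ ⟨k + 1, hk'⟩ (by simp only; omega), hy _ _ ⟨k + 1, hk'⟩ (by simp only; omega),
      ite_mul, mul_ite, zero_mul, mul_zero]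
    by_cases hj : (j : ℕ) = i + (degM x + degM y)
    · have hl : (i : ℕ) + degM x < d + 1 := by omega
      rw [if_pos hj, Finset.sum_eq_single ⟨i + degM x, hl⟩ (fun l _ hl' => ?_) (by simp),
        if_pos (by simp only; omega), if_pos rfl, MvPolynomial.monomial_mul, mul_one,
        leafData_mul, leafExp_append, leafData_length]
      rw [if_neg (fun h => hl' (Fin.ext h)), ite_self]
    · rw [if_neg hj]
      refine Finset.sum_eq_zero fun l _ => ?_
      split_ifs <;> first | rfl | omega


lemma evalNA_genericArr_apply {g : FreeNonUnitalNonAssocAlgebra F (Fin n)} {i j : Fin (d + 1)}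
    {k : Fin d} (hk : ∀ m ∈ (coeffOf g).support, (k : ℕ) + degM m ≤ d) :
    evalNA (genericArr F n d) g i j k = ∑ m ∈ (coeffOf g).support, coeffOf g m •
      if (j : ℕ) = i + degM m then MvPolynomial.monomial (leafExp (leafData m k) i) 1 else 0 := by
  rw [Arr.evalNA_apply, Finsupp.sum]
  exact Finset.sum_congr rfl fun m hm => by rw [evalWith_genericArr_apply m i j k (hk m hm)]

lemma coeff_evalNA_genericArr {g : FreeNonUnitalNonAssocAlgebra F (Fin n)} {i j : Fin (d + 1)}
    {k : Fin d} (hk : ∀ m ∈ (coeffOf g).support, (k : ℕ) + degM m ≤ d) {m₀ : FreeMagma (Fin n)}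
    (hj : (j : ℕ) = i + degM m₀) :
    (evalNA (genericArr F n d) g i j k).coeff (leafExp (leafData m₀ k) i) = coeffOf g m₀ := by
  classical
  rw [evalNA_genericArr_apply hk, MvPolynomial.coeff_sum]
  refine (Finset.sum_eq_single m₀ (fun m _ hm => ?_) (fun hm₀ => ?_)).trans ?_
  · have hexp : leafExp (leafData m k) i ≠ leafExp (leafData m₀ k) i :=
      ((leafExp_injective i).comp (leafData_injective k)).ne hm
    split_ifs <;> simp [MvPolynomial.coeff_monomial, hexp]
  · simp [Finsupp.notMem_support_iff.mp hm₀]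
  · simp [hj]

lemma isHomogeneous_evalNA_genericArr {g : FreeNonUnitalNonAssocAlgebra F (Fin n)}
    {i j : Fin (d + 1)} {k : Fin d} (hk : ∀ m ∈ (coeffOf g).support, (k : ℕ) + degM m ≤ d)
    {D : ℕ} (hj : (j : ℕ) = i + D) :
    (evalNA (genericArr F n d) g i j k).IsHomogeneous D := by
  rw [evalNA_genericArr_apply hk]
  refine MvPolynomial.IsHomogeneous.sum _ _ _ fun m _ => ?_
  split_ifs with hm
  · rw [MvPolynomial.smul_monomial]
    exact MvPolynomial.isHomogeneous_monomial _ (by rw [degree_leafExp, leafData_length]; omega)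
  · rw [smul_zero]
    exact MvPolynomial.isHomogeneous_zero _ _ _

end Generic

lemma exists_evalNA_ne_zero {F : Type*} [Field F] {n d : ℕ} (hF : (d : Cardinal) < Cardinal.mk F)
    {g : FreeNonUnitalNonAssocAlgebra F (Fin n)} (hg : g ≠ 0)
    (hdeg : ∀ m ∈ (coeffOf g).support, degM m ≤ d) :
    ∃ a : Fin n → Arr d F, evalNA a g ≠ 0 := by
  obtain ⟨m₀, hm₀⟩ : (coeffOf g).support.Nonempty :=
    Finsupp.support_nonempty_iff.mpr (MonoidAlgebra.coeff_eq_zero.not.mpr hg)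
  have hm₀d := hdeg m₀ hm₀
  have hd : 0 < d := (one_le_degM m₀).trans hm₀d
  have hk : ∀ m ∈ (coeffOf g).support, ((⟨0, hd⟩ : Fin d) : ℕ) + degM m ≤ d :=
    fun m hm => (zero_add _).trans_le (hdeg m hm)
  let j₀ : Fin (d + 1) := ⟨degM m₀, by omega⟩
  have hj₀ : (j₀ : ℕ) = ((0 : Fin (d + 1)) : ℕ) + degM m₀ := (zero_add _).symm
  set P := evalNA (genericArr F n d) g 0 j₀ ⟨0, hd⟩
  have hP : P ≠ 0 := fun h => Finsupp.mem_support_iff.mp hm₀ <|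
    (coeff_evalNA_genericArr hk hj₀).symm.trans
      ((congrArg (MvPolynomial.coeff _) h).trans (MvPolynomial.coeff_zero _))
  obtain ⟨z, hz⟩ : ∃ z, MvPolynomial.eval z P ≠ 0 := by
    by_contra! h
    exact hP ((isHomogeneous_evalNA_genericArr hk hj₀).eq_zero_of_forall_eval_eq_zero_of_le_card
      h ((Nat.cast_le.mpr hm₀d).trans hF.le))
  refine ⟨Arr.map (MvPolynomial.aeval z) ∘ genericArr F n d, fun h => hz ?_⟩
  rw [evalNA, evalNAWith_comp _ (Arr.map_mul _)] at h
  exact congrFun (congrFun (congrFun h 0) j₀) ⟨0, hd⟩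

theorem not_PI_for_Ad_general {F : Type*} [Field F] (n d : ℕ)
    (hF : (d : Cardinal) < Cardinal.mk F)
    (f : Unitization F (FreeNonUnitalNonAssocAlgebra F (Fin n))) (hf : f ≠ 0)
    (hdeg : ∀ m ∈ (coeffOf f.snd).support, degM m ≤ d) :
    ∃ b : Fin n → Unitization F (Arr d F), evalUnit b f ≠ 0 := by
  obtain ⟨a, ha⟩ : ∃ a : Fin n → Arr d F, f.snd ≠ 0 → evalNA a f.snd ≠ 0 := by
    by_cases hsnd : f.snd = 0
    · exact ⟨0, absurd hsnd⟩
    · exact (exists_evalNA_ne_zero hF hsnd hdeg).imp fun _ ha _ => ha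
  refine ⟨fun i => a i, fun h => hf ?_⟩
  rw [evalUnit_comp_inr] at h
  have hfst : f.fst = 0 := by simpa using congrArg (·.fst) h
  have hsnd : f.snd = 0 := not_imp_not.mp ha (by simpa using congrArg (·.snd) h)
  exact Unitization.ext hfst hsnd

/-- Lemma 3.2 / `lowerBound`.  Let `F` be a field with more than `d`
elements, `n, d ≥ 1`.  Let `f` be a nonzero element of the unitization of `F_{Ā,C̄}[X]` whose
`F_{Ā,C̄}[X]`-component has degree `≤ d`.  Then `f` is not a polynomial identity for the
unital nonassociative algebra `A_d = Unitization F (A'_d(F))`: there exist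
`b_1, …, b_n ∈ A_d` such that the evaluation of `f` at `(b_1, …, b_n)` (via the unique unital
`F`-algebra homomorphism sending `x_i ↦ b_i` and the adjoined unit to the unit of `A_d`) is
nonzero. -/
theorem not_PI_for_Ad {F : Type*} [Field F] (n d : ℕ) (hn : 1 ≤ n) (hd : 1 ≤ d)
    (hF : (d : Cardinal) < Cardinal.mk F)
    (f : Unitization F (FreeNonUnitalNonAssocAlgebra F (Fin n))) (hf : f ≠ 0)
    (hdeg : ∀ m ∈ (coeffOf f.snd).support, degM m ≤ d) :
    ∃ b : Fin n → Unitization F (Arr d F), evalUnit b f ≠ 0 :=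
  not_PI_for_Ad_general n d hF f hf hdeg

end NAPIT
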